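/- Classification of orthogonal axisymmetric relative equilibria: let (𝐑, ξ, η) be an axisymmetric relative equilibrium triple with 𝐑·ξ = 0 and ξ ≠ 0, and set R = |𝐑|. Then one of the following holds: (a) cylindrical: 𝐑·e₁ = 0, ξ = ξ₁ e₁ with ξ₁ ≠ 0, ξ₁² = (2R² + 3 − 9I₂)/(2R⁵), and η is arbitrary; (b) hyperbolic: 𝐑·e₁ = 0, η = (I₁ − I₂)(ξ·e₁)/I₁, and |ξ|² = (2R² + 3 − 9I₂)/(2R⁵); (c) isolated: 𝐑 = ±R e₁, ξ·e₁ = 0, η = 0, and |ξ|² = (2R² + 3 − 9I₁)/(2R⁵). -/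

import Mathlib

noncomputable section

open Real

/-- The Euclidean dot product on `ℝ³`. -/
def dot3 (u v : Fin 3 → ℝ) : ℝ := u 0 * v 0 + u 1 * v 1 + u 2 * v 2

/-- The Euclidean norm on `ℝ³`. -/
def norm3 (u : Fin 3 → ℝ) : ℝ := Real.sqrt (dot3 u u)

/-- The `j`-th standard basis vector of `ℝ³`. -/
def e3 (j : Fin 3) : Fin 3 → ℝ := fun i => if i = j then 1 else 0

/-- The cross product on `ℝ³`. -/
def cross3 (u v : Fin 3 → ℝ) : Fin 3 → ℝ :=
  ![u 1 * v 2 - u 2 * v 1, u 2 * v 0 - u 0 * v 2, u 0 * v 1 - u 1 * v 0]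

/-- The inertia tensor `diag (I₁, I₂, I₃)` applied to a vector. -/
def inertiaApply (I₁ I₂ I₃ : ℝ) (v : Fin 3 → ℝ) : Fin 3 → ℝ :=
  ![I₁ * v 0, I₂ * v 1, I₃ * v 2]

/-- The gradient of the second-order gravitational potential:
`∇V₂(𝐑) = 𝐑/R³ + 3𝐑/(2R⁵) + 3𝐈𝐑/R⁵ − 15(𝐑·𝐈𝐑)𝐑/(2R⁷)` with `R = |𝐑|`. -/
def gradV2 (I₁ I₂ I₃ : ℝ) (R : Fin 3 → ℝ) : Fin 3 → ℝ :=
  fun i => R i / (norm3 R) ^ 3 + 3 * R i / (2 * (norm3 R) ^ 5)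
    + 3 * (inertiaApply I₁ I₂ I₃ R) i / (norm3 R) ^ 5
    - 15 * (dot3 R (inertiaApply I₁ I₂ I₃ R)) * R i / (2 * (norm3 R) ^ 7)

/-- `(𝐑, ξ, η)` is an axisymmetric relative equilibrium triple for the inertia tensor
`𝐈 = diag (I₁, I₂, I₂)`: `𝐑 ≠ 0`, `ξ × (𝐈ξ − (𝐑·ξ)𝐑 − I₁ η e₁) = 0` and
`∇V₂(𝐑) = −(𝐑·ξ)ξ + |ξ|²𝐑`. -/
def IsAxiRelEq (I₁ I₂ : ℝ) (R ξ : Fin 3 → ℝ) (η : ℝ) : Prop :=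
  R ≠ 0 ∧
  cross3 ξ (fun i => (inertiaApply I₁ I₂ I₂ ξ) i - (dot3 R ξ) * R i - I₁ * η * e3 0 i) = 0 ∧
  (∀ i, gradV2 I₁ I₂ I₂ R i = -(dot3 R ξ) * ξ i + (dot3 ξ ξ) * R i)

/-!
Since `𝐑·ξ = 0`, the gradient equation reads `∇V₂(𝐑) = |ξ|² 𝐑`, and `∇V₂(𝐑)` is diagonal: its
`i`-th component is `Rᵢ` times a factor affine in the principal moment `Iᵢ` with nonzero slope
`3/R⁵`. So `𝐑` cannot have nonzero components along two axes with different moments: either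
`𝐑·e₁ = 0` or `𝐑` lies on the symmetry axis. In both cases `𝐑·𝐈𝐑 = Iᵢ R²` for an axis `i` with
`Rᵢ ≠ 0`, and the factor, hence `|ξ|²`, evaluates to `(2R² + 3 − 9Iᵢ)/(2R⁵)`. With `𝐑·ξ = 0` the
cross-product condition reduces to `c · (ξ − (ξ·e₁) e₁) = 0` with `c = (I₁ − I₂)(ξ·e₁) − I₁η`,
which separates the cylindrical from the hyperbolic case and forces `η = 0` on the axis.
-/

lemma vec3_eq_zero_iff {α : Type*} [Zero α] (u : Fin 3 → α) :
    u = 0 ↔ u 0 = 0 ∧ u 1 = 0 ∧ u 2 = 0 := by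
  refine ⟨by rintro rfl; simp, fun ⟨h0, h1, h2⟩ => funext fun i => ?_⟩
  fin_cases i <;> assumption

lemma vec3_ne_zero_iff {α : Type*} [Zero α] (u : Fin 3 → α) :
    u ≠ 0 ↔ u 0 ≠ 0 ∨ u 1 ≠ 0 ∨ u 2 ≠ 0 := by
  rw [Ne, vec3_eq_zero_iff]
  tauto

lemma dot3_self (u : Fin 3 → ℝ) : dot3 u u = u 0 ^ 2 + u 1 ^ 2 + u 2 ^ 2 := by
  rw [dot3]
  ring

lemma norm3_sq (u : Fin 3 → ℝ) : norm3 u ^ 2 = u 0 ^ 2 + u 1 ^ 2 + u 2 ^ 2 := by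
  rw [norm3, dot3_self, Real.sq_sqrt (by positivity)]

lemma norm3_pos {u : Fin 3 → ℝ} (hu : u ≠ 0) : 0 < norm3 u := by
  refine Real.sqrt_pos.mpr ?_
  rw [dot3_self]
  rcases (vec3_ne_zero_iff u).mp hu with h | h | h <;> positivity

lemma eq_smul_e3_zero_or_eq_neg_smul {u : Fin 3 → ℝ} (h1 : u 1 = 0) (h2 : u 2 = 0) :
    u = norm3 u • e3 0 ∨ u = (-norm3 u) • e3 0 := by
  have h : (norm3 u - u 0) * (norm3 u + u 0) = 0 := by
    linear_combination norm3_sq u + u 1 * h1 + u 2 * h2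
  refine (mul_eq_zero.mp h).imp (fun h => ?_) (fun h => ?_) <;>
    funext i <;> fin_cases i <;> simp [e3, h1, h2] <;> linarith

lemma inertiaApply_apply (I₁ I₂ I₃ : ℝ) (v : Fin 3 → ℝ) (i : Fin 3) :
    inertiaApply I₁ I₂ I₃ v i = ![I₁, I₂, I₃] i * v i := by
  fin_cases i <;> rfl

lemma dot3_inertiaApply_axisymmetric (I₁ I₂ : ℝ) (u : Fin 3 → ℝ) :
    dot3 u (inertiaApply I₁ I₂ I₂ u) = I₂ * norm3 u ^ 2 + (I₁ - I₂) * u 0 ^ 2 := by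
  rw [norm3_sq, dot3]
  simp only [inertiaApply, Matrix.cons_val_zero, Matrix.cons_val_one, Matrix.cons_val]
  ring

/-- Evaluated at `r = |𝐑|`, `q = 𝐑·𝐈𝐑` and a principal moment `a = Iᵢ`. -/
def gradV2Factor (r q a : ℝ) : ℝ :=
  1 / r ^ 3 + 3 / (2 * r ^ 5) + 3 * a / r ^ 5 - 15 * q / (2 * r ^ 7)

lemma gradV2_apply (I₁ I₂ I₃ : ℝ) (R : Fin 3 → ℝ) (i : Fin 3) :
    gradV2 I₁ I₂ I₃ R i =
      gradV2Factor (norm3 R) (dot3 R (inertiaApply I₁ I₂ I₃ R)) (![I₁, I₂, I₃] i) * R i := by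
  simp only [gradV2, gradV2Factor, inertiaApply_apply I₁ I₂ I₃ R i]
  ring

lemma gradV2Factor_injective {r : ℝ} (hr : r ≠ 0) (q : ℝ) :
    Function.Injective (gradV2Factor r q) := by
  intro a b h
  have : 3 * (a - b) / r ^ 5 = 0 := by
    rw [← sub_eq_zero.mpr h, gradV2Factor, gradV2Factor]
    ring
  simpa [hr, sub_eq_zero] using this

lemma gradV2Factor_mul_sq {r : ℝ} (hr : r ≠ 0) (a : ℝ) :
    gradV2Factor r (a * r ^ 2) a = (2 * r ^ 2 + 3 - 9 * a) / (2 * r ^ 5) := by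
  rw [gradV2Factor]
  field_simp
  ring

lemma axial_or_balanced_of_cross3_eq_zero {I₁ I₂ η : ℝ} {R ξ : Fin 3 → ℝ}
    (horth : dot3 R ξ = 0)
    (h : cross3 ξ (fun i => inertiaApply I₁ I₂ I₂ ξ i - dot3 R ξ * R i - I₁ * η * e3 0 i) = 0) :
    (ξ 1 = 0 ∧ ξ 2 = 0) ∨ (I₁ - I₂) * ξ 0 = I₁ * η := by
  have h1 := congrFun h 1
  have h2 := congrFun h 2
  simp only [cross3, inertiaApply, e3, horth, Matrix.cons_val, Matrix.cons_val_zero,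
    Matrix.cons_val_one, Fin.reduceEq, ↓reduceIte, zero_mul, sub_zero, mul_zero, mul_one,
    one_ne_zero, Pi.zero_apply] at h1 h2
  have hξ1 : ξ 1 * ((I₁ - I₂) * ξ 0 - I₁ * η) = 0 := by linear_combination -h2
  have hξ2 : ξ 2 * ((I₁ - I₂) * ξ 0 - I₁ * η) = 0 := by linear_combination h1
  rcases eq_or_ne ((I₁ - I₂) * ξ 0 - I₁ * η) 0 with hc | hc
  · exact Or.inr (sub_eq_zero.mp hc)
  · exact Or.inl ⟨(mul_eq_zero.mp hξ1).resolve_right hc, (mul_eq_zero.mp hξ2).resolve_right hc⟩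

namespace IsAxiRelEq

variable {I₁ I₂ η : ℝ} {R ξ : Fin 3 → ℝ}

lemma gradV2Factor_eq_dot3_self (hre : IsAxiRelEq I₁ I₂ R ξ η) (horth : dot3 R ξ = 0)
    {i : Fin 3} (hi : R i ≠ 0) :
    gradV2Factor (norm3 R) (dot3 R (inertiaApply I₁ I₂ I₂ R)) (![I₁, I₂, I₂] i) = dot3 ξ ξ := by
  have h := hre.2.2 i
  rw [gradV2_apply, horth] at h
  exact mul_right_cancel₀ hi (by linarith)

lemma moment_eq_of_apply_ne_zero (hre : IsAxiRelEq I₁ I₂ R ξ η) (horth : dot3 R ξ = 0)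
    {i j : Fin 3} (hi : R i ≠ 0) (hj : R j ≠ 0) : ![I₁, I₂, I₂] i = ![I₁, I₂, I₂] j :=
  gradV2Factor_injective (norm3_pos hre.1).ne' _
    ((hre.gradV2Factor_eq_dot3_self horth hi).trans (hre.gradV2Factor_eq_dot3_self horth hj).symm)

lemma dot3_self_eq (hre : IsAxiRelEq I₁ I₂ R ξ η) (horth : dot3 R ξ = 0) {i : Fin 3}
    (hi : R i ≠ 0) (hq : dot3 R (inertiaApply I₁ I₂ I₂ R) = ![I₁, I₂, I₂] i * norm3 R ^ 2) :
    dot3 ξ ξ = (2 * norm3 R ^ 2 + 3 - 9 * ![I₁, I₂, I₂] i) / (2 * norm3 R ^ 5) := by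
  rw [← hre.gradV2Factor_eq_dot3_self horth hi, hq, gradV2Factor_mul_sq (norm3_pos hre.1).ne']

end IsAxiRelEq

theorem stmt10_general (I₁ I₂ : ℝ)
    (hI₁ : 0 < I₁) (hne : I₁ ≠ I₂)
    (R ξ : Fin 3 → ℝ) (η : ℝ)
    (hre : IsAxiRelEq I₁ I₂ R ξ η)
    (horth : dot3 R ξ = 0) (hξ : ξ ≠ 0) :
    (R 0 = 0 ∧ ξ 1 = 0 ∧ ξ 2 = 0 ∧ ξ 0 ≠ 0 ∧
      (ξ 0) ^ 2 = (2 * (norm3 R) ^ 2 + 3 - 9 * I₂) / (2 * (norm3 R) ^ 5)) ∨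
    (R 0 = 0 ∧ η = (I₁ - I₂) * (ξ 0) / I₁ ∧
      dot3 ξ ξ = (2 * (norm3 R) ^ 2 + 3 - 9 * I₂) / (2 * (norm3 R) ^ 5)) ∨
    ((R = (norm3 R) • e3 0 ∨ R = (-(norm3 R)) • e3 0) ∧ ξ 0 = 0 ∧ η = 0 ∧
      dot3 ξ ξ = (2 * (norm3 R) ^ 2 + 3 - 9 * I₁) / (2 * (norm3 R) ^ 5)) := by
  have hq := dot3_inertiaApply_axisymmetric I₁ I₂ R
  have hcases := axial_or_balanced_of_cross3_eq_zero horth hre.2.1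
  rw [Ne, vec3_eq_zero_iff] at hξ
  by_cases h0 : R 0 = 0
  · have hq₂ : dot3 R (inertiaApply I₁ I₂ I₂ R) = I₂ * norm3 R ^ 2 := by simp [hq, h0]
    have hspeed : dot3 ξ ξ = (2 * norm3 R ^ 2 + 3 - 9 * I₂) / (2 * norm3 R ^ 5) := by
      rcases ((vec3_ne_zero_iff R).mp hre.1).resolve_left (not_not.mpr h0) with h1 | h2
      · exact hre.dot3_self_eq (i := 1) horth h1 hq₂
      · exact hre.dot3_self_eq (i := 2) horth h2 hq₂
    rcases hcases with ⟨h1, h2⟩ | hbal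
    · refine Or.inl ⟨h0, h1, h2, fun h => hξ ⟨h, h1, h2⟩, ?_⟩
      rw [← hspeed, dot3_self, h1, h2]
      ring
    · exact Or.inr (Or.inl ⟨h0, by field_simp; linarith, hspeed⟩)
  · have h1 : R 1 = 0 := by_contra fun h1 => hne (hre.moment_eq_of_apply_ne_zero horth h0 h1)
    have h2 : R 2 = 0 := by_contra fun h2 => hne (hre.moment_eq_of_apply_ne_zero horth h0 h2)
    have hξ0 : ξ 0 = 0 := by simpa [dot3, h0, h1, h2] using horth
    have hq₁ : dot3 R (inertiaApply I₁ I₂ I₂ R) = I₁ * norm3 R ^ 2 := by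
      rw [hq, norm3_sq, h1, h2]
      ring
    have hη : η = 0 := by
      rcases hcases with ⟨h1, h2⟩ | hbal
      · exact (hξ ⟨hξ0, h1, h2⟩).elim
      · simpa [hξ0, hI₁.ne'] using hbal.symm
    exact Or.inr (Or.inr ⟨eq_smul_e3_zero_or_eq_neg_smul h1 h2, hξ0, hη,
      hre.dot3_self_eq (i := 0) horth h0 hq₁⟩)

theorem stmt10 (I₁ I₂ : ℝ)
    (hI₁ : 0 < I₁) (hI₂ : 0 < I₂) (hne : I₁ ≠ I₂) (hsum : I₁ + 2 * I₂ = 1)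
    (R ξ : Fin 3 → ℝ) (η : ℝ)
    (hre : IsAxiRelEq I₁ I₂ R ξ η)
    (horth : dot3 R ξ = 0) (hξ : ξ ≠ 0) :
    (R 0 = 0 ∧ ξ 1 = 0 ∧ ξ 2 = 0 ∧ ξ 0 ≠ 0 ∧
      (ξ 0) ^ 2 = (2 * (norm3 R) ^ 2 + 3 - 9 * I₂) / (2 * (norm3 R) ^ 5)) ∨
    (R 0 = 0 ∧ η = (I₁ - I₂) * (ξ 0) / I₁ ∧
      dot3 ξ ξ = (2 * (norm3 R) ^ 2 + 3 - 9 * I₂) / (2 * (norm3 R) ^ 5)) ∨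
    ((R = (norm3 R) • e3 0 ∨ R = (-(norm3 R)) • e3 0) ∧ ξ 0 = 0 ∧ η = 0 ∧
      dot3 ξ ξ = (2 * (norm3 R) ^ 2 + 3 - 9 * I₁) / (2 * (norm3 R) ^ 5)) :=
  stmt10_general I₁ I₂ hI₁ hne R ξ η hre horth hξ
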